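/- Let K ⊂ ℝ^{2n} be a compact convex polytope containing 0 in its interior, with (2n−1)-dimensional facets F_1,…,F_m, unit outer normals n_i, heights h_i = h_K(n_i), and associated vectors p_i = (2/h_i) J n_i. Let c > 0 be a constant and let z ∈ H¹([0,1],ℝ^{2n}) be such that for almost every t there are indices j_1,…,j_l with F_{j_1} ∩ … ∩ F_{j_l} ≠ ∅ and ż(t) ∈ c · conv{p_{j_1},…,p_{j_l}}. Then ∫₀¹ H_K*(−Jż(t)) dt = c². -/

import Mathlib

/-!
Write `w = -Jż(t)` and `ż(t) = c v` with `v ∈ conv{p_j : j ∈ S}`. Since `J² = -1`,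
`⟨-J p_j, x⟩ = (2/h_j)⟨x, n_j⟩`, which is `≤ 2` on `K` and `= 2` on the face `⋂_{j∈S} F_j`;
hence `⟨w, ·⟩` attains its maximum `2c` over `K` on that face. Then `⟨w, ξ⟩ ≤ 2c j_K(ξ)`, so
`⟨w, ξ⟩ - j_K(ξ)² ≤ 2c j_K(ξ) - j_K(ξ)² ≤ c²`, with equality at `ξ = c x₀` for `x₀` on the face.
Thus `H_K*(-Jż) = c²` almost everywhere.
-/

open MeasureTheory Set Pointwise

noncomputable section

/-- ℝ^{2n} modeled as functions `Fin (2*n) → ℝ`. -/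
abbrev E2 (n : ℕ) : Type := Fin (2 * n) → ℝ

/-- The standard inner product on `ℝ^{2n}`. -/
def ip {n : ℕ} (x y : E2 n) : ℝ := ∑ i, x i * y i

/-- The standard complex structure `J = [[0, -Iₙ],[Iₙ, 0]]`. -/
def Jmap {n : ℕ} (x : E2 n) : E2 n := fun i =>
  if h : (i : ℕ) < n then -x ⟨(i : ℕ) + n, by omega⟩
  else x ⟨(i : ℕ) - n, by have := i.isLt; omega⟩

/-- The standard symplectic form `ω₀(u,v) = ⟨Ju, v⟩`. -/
def omega0 {n : ℕ} (u v : E2 n) : ℝ := ip (Jmap u) v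

/-- The Legendre transform `H_K*(w) = sup_ξ (⟨w,ξ⟩ - H_K(ξ))` of the square
`H_K = (gauge K)²` of the Minkowski functional of `K`. -/
def HKstar {n : ℕ} (K : Set (E2 n)) (w : E2 n) : ℝ :=
  sSup {r : ℝ | ∃ ξ : E2 n, r = ip w ξ - (gauge K ξ) ^ 2}

section Gauge

variable {E : Type*} [AddCommGroup E] [Module ℝ E] {K : Set E}

lemma le_mul_gauge_of_forall_le (hK : Absorbent ℝ K) (f : E →ₗ[ℝ] ℝ) {a : ℝ} (ha : 0 < a)
    (hf : ∀ x ∈ K, f x ≤ a) (ξ : E) : f ξ ≤ a * gauge K ξ := by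
  rw [← div_le_iff₀' ha]
  refine le_csInf hK.gauge_set_nonempty ?_
  rintro r ⟨hr, x, hx, rfl⟩
  rw [div_le_iff₀' ha, map_smul, smul_eq_mul, mul_comm a]
  exact mul_le_mul_of_nonneg_left (hf x hx) hr.le

lemma isGreatest_range_sub_gauge_sq (hK : Absorbent ℝ K) (f : E →ₗ[ℝ] ℝ) {c : ℝ} (hc : 0 < c)
    (hf : IsGreatest (f '' K) (2 * c)) :
    IsGreatest (range fun ξ => f ξ - gauge K ξ ^ 2) (c ^ 2) := by
  obtain ⟨⟨x₀, hx₀, hfx₀⟩, hf_le⟩ := hf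
  have hbound := le_mul_gauge_of_forall_le hK f (by positivity) fun x hx => hf_le ⟨x, hx, rfl⟩
  have hgauge : gauge K x₀ = 1 := by
    have := hbound x₀
    rw [hfx₀] at this
    exact le_antisymm (gauge_le_one_of_mem hx₀) (by nlinarith)
  refine ⟨⟨c • x₀, ?_⟩, ?_⟩
  · simp only [map_smul, smul_eq_mul, hfx₀, gauge_smul_of_nonneg hc.le, hgauge]
    ring
  · rintro _ ⟨ξ, rfl⟩
    nlinarith [hbound ξ, sq_nonneg (c - gauge K ξ)]

end Gauge

section SymplecticSpace

variable {n : ℕ}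

lemma ip_comm (x y : E2 n) : ip x y = ip y x := dotProduct_comm x y

lemma ip_smul_left (a : ℝ) (x y : E2 n) : ip (a • x) y = a * ip x y := smul_dotProduct a x y

def Jlin (n : ℕ) : E2 n →ₗ[ℝ] E2 n where
  toFun := Jmap
  map_add' x y := by
    funext i
    simp only [Jmap, Pi.add_apply]
    split_ifs <;> ring
  map_smul' a x := by
    funext i
    simp only [Jmap, Pi.smul_apply, smul_eq_mul, RingHom.id_apply]
    split_ifs <;> ring

lemma Jmap_smul (a : ℝ) (x : E2 n) : Jmap (a • x) = a • Jmap x := (Jlin n).map_smul a x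

lemma Jmap_Jmap (x : E2 n) : Jmap (Jmap x) = -x := by
  funext i
  simp only [Jmap, Pi.neg_apply]
  split_ifs
  · omega
  · congr 2; ext; simp
  · congr 2; ext; simp; omega
  · omega

lemma isLinearMap_ip_neg_Jmap (x : E2 n) : IsLinearMap ℝ fun v : E2 n => ip (-(Jmap v)) x := by
  have hφ : (fun v : E2 n => ip (-(Jmap v)) x) = (dotProductBilin ℝ ℝ x).comp (-Jlin n) :=
    funext fun v => ip_comm _ _
  rw [hφ]
  exact LinearMap.isLinear _

lemma ip_neg_Jmap_smul_Jmap (a : ℝ) (y x : E2 n) : ip (-(Jmap (a • Jmap y))) x = a * ip x y := by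
  rw [Jmap_smul, Jmap_Jmap, smul_neg, neg_neg, ip_smul_left, ip_comm]

lemma HKstar_eq_sq_of_isGreatest {K : Set (E2 n)} (hK : Absorbent ℝ K) {w : E2 n} {c : ℝ}
    (hc : 0 < c) (hw : IsGreatest (ip w '' K) (2 * c)) : HKstar K w = c ^ 2 := by
  have hset : {r : ℝ | ∃ ξ, r = ip w ξ - gauge K ξ ^ 2} =
      range fun ξ => dotProductBilin ℝ ℝ w ξ - gauge K ξ ^ 2 := by
    ext r; exact exists_congr fun ξ => eq_comm
  rw [HKstar, hset]
  exact (isGreatest_range_sub_gauge_sq hK _ hc hw).csSup_eq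

lemma pos_of_forall_ip_le {K : Set (E2 n)} (h0 : (0 : E2 n) ∈ interior K) {u : E2 n}
    (hu : ip u u = 1) {b : ℝ} (hb : ∀ x ∈ K, ip x u ≤ b) : 0 < b := by
  have hnear : ∀ᶠ t : ℝ in nhds 0, t • u ∈ K :=
    ((continuous_id.smul continuous_const).tendsto' 0 0 (zero_smul ℝ u)).eventually
      (mem_interior_iff_mem_nhds.mp h0)
  obtain ⟨t, htK, ht⟩ :=
    ((hnear.filter_mono nhdsWithin_le_nhds).and (self_mem_nhdsWithin (s := Ioi 0))).exists
  have := hb _ htK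
  rw [ip_smul_left, hu, mul_one] at this
  exact (mem_Ioi.mp ht).trans_le this

end SymplecticSpace

section Polytope

variable {n m : ℕ} {nv : Fin m → E2 n} {h : Fin m → ℝ} {S : Finset (Fin m)} {v x : E2 n}

lemma ip_neg_Jmap_le_of_mem_convexHull (hpos : ∀ j, 0 < h j)
    (hv : v ∈ convexHull ℝ ((fun j => (2 / h j) • Jmap (nv j)) '' (S : Set (Fin m))))
    (hx : ∀ i, ip x (nv i) ≤ h i) : ip (-(Jmap v)) x ≤ 2 := by
  refine convexHull_min ?_ (convex_halfSpace_le (isLinearMap_ip_neg_Jmap x) 2) hv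
  rintro _ ⟨j, -, rfl⟩
  calc ip (-(Jmap ((2 / h j) • Jmap (nv j)))) x = 2 / h j * ip x (nv j) :=
        ip_neg_Jmap_smul_Jmap _ _ _
    _ ≤ 2 / h j * h j := mul_le_mul_of_nonneg_left (hx j) (div_nonneg zero_le_two (hpos j).le)
    _ = 2 := div_mul_cancel₀ 2 (hpos j).ne'

lemma ip_neg_Jmap_eq_of_mem_convexHull (hpos : ∀ j, 0 < h j)
    (hv : v ∈ convexHull ℝ ((fun j => (2 / h j) • Jmap (nv j)) '' (S : Set (Fin m))))
    (hx : x ∈ ⋂ j ∈ S, {x : E2 n | ip x (nv j) = h j}) : ip (-(Jmap v)) x = 2 := by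
  refine convexHull_min ?_ (convex_hyperplane (isLinearMap_ip_neg_Jmap x) 2) hv
  rintro _ ⟨j, hj, rfl⟩
  rw [mem_ofPred_eq, ip_neg_Jmap_smul_Jmap, mem_iInter₂.mp hx j hj,
    div_mul_cancel₀ 2 (hpos j).ne']

lemma isGreatest_ip_neg_Jmap_of_mem_smul_convexHull {K : Set (E2 n)}
    (hKdef : K = {x : E2 n | ∀ i, ip x (nv i) ≤ h i}) (hpos : ∀ j, 0 < h j)
    (hface : (K ∩ ⋂ j ∈ S, {x : E2 n | ip x (nv j) = h j}).Nonempty) {c : ℝ} (hc : 0 ≤ c)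
    {u : E2 n}
    (hu : u ∈ c • convexHull ℝ ((fun j => (2 / h j) • Jmap (nv j)) '' (S : Set (Fin m)))) :
    IsGreatest (ip (-(Jmap u)) '' K) (2 * c) := by
  obtain ⟨v, hv, rfl⟩ := hu
  obtain ⟨x₀, hx₀K, hx₀S⟩ := hface
  have hscale (x : E2 n) : ip (-(Jmap (c • v))) x = c * ip (-(Jmap v)) x := by
    rw [Jmap_smul, ← smul_neg, ip_smul_left]
  refine ⟨⟨x₀, hx₀K, ?_⟩, ?_⟩
  · rw [hscale, ip_neg_Jmap_eq_of_mem_convexHull hpos hv hx₀S, mul_comm]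
  · rintro _ ⟨x, hx, rfl⟩
    rw [hscale, mul_comm 2 c]
    exact mul_le_mul_of_nonneg_left
      (ip_neg_Jmap_le_of_mem_convexHull hpos hv fun i => (hKdef ▸ hx) i) hc

end Polytope

theorem integral_HKstar_on_polytope_general
    (n m : ℕ)
    (K : Set (E2 n)) (nv : Fin m → E2 n) (h : Fin m → ℝ)
    (hKdef : K = {x : E2 n | ∀ i, ip x (nv i) ≤ h i})
    (hunit : ∀ i, ip (nv i) (nv i) = 1)
    (h0 : (0 : E2 n) ∈ interior K)
    (c : ℝ) (hc : 0 < c)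
    (dz : ℝ → E2 n)
    (hae : ∀ᵐ t ∂(volume : Measure ℝ), t ∈ Set.Ioo (0:ℝ) 1 →
      ∃ S : Finset (Fin m), S.Nonempty ∧
        (K ∩ ⋂ j ∈ S, {x : E2 n | ip x (nv j) = h j}).Nonempty ∧
        dz t ∈ c • convexHull ℝ ((fun j => (2 / h j) • Jmap (nv j)) '' (S : Set (Fin m)))) :
    ∫ t in (0:ℝ)..1, HKstar K (-(Jmap (dz t))) = c ^ 2 := by
  have hK : Absorbent ℝ K := absorbent_nhds_zero (mem_interior_iff_mem_nhds.mp h0)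
  have hpos (j : Fin m) : 0 < h j := pos_of_forall_ip_le h0 (hunit j) fun x hx => (hKdef ▸ hx) j
  have hpointwise : ∀ᵐ t ∂(volume : Measure ℝ), t ∈ uIoc (0:ℝ) 1 →
      HKstar K (-(Jmap (dz t))) = c ^ 2 := by
    filter_upwards [hae, volume.ae_ne 1] with t ht ht1 htI
    rw [uIoc_of_le zero_le_one] at htI
    obtain ⟨S, -, hface, hdz⟩ := ht ⟨htI.1, htI.2.lt_of_ne ht1⟩
    exact HKstar_eq_sq_of_isGreatest hK hc
      (isGreatest_ip_neg_Jmap_of_mem_smul_convexHull hKdef hpos hface hc.le hdz)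
  rw [intervalIntegral.integral_congr_ae hpointwise]
  simp

/-- Proposition 3.5: for a convex polytope `K = {x | ⟨x, nᵢ⟩ ≤ hᵢ}`
with `0 ∈ Int K`, facets `Fᵢ = K ∩ {⟨x, nᵢ⟩ = hᵢ}` and `pᵢ = (2/hᵢ) J nᵢ`, if
`z ∈ H¹([0,1],ℝ^{2n})` is such that for a.e. `t` there is a nonempty face
`F_{j₁} ∩ … ∩ F_{j_l} ≠ ∅` with `ż(t) ∈ c·conv{p_{j₁},…,p_{j_l}}`, then
`∫₀¹ H_K*(-Jż(t)) dt = c²`. -/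
theorem integral_HKstar_on_polytope
    (n m : ℕ)
    (K : Set (E2 n)) (nv : Fin m → E2 n) (h : Fin m → ℝ)
    (hKcomp : IsCompact K)
    (hKdef : K = {x : E2 n | ∀ i, ip x (nv i) ≤ h i})
    (hunit : ∀ i, ip (nv i) (nv i) = 1)
    (hfacet : ∀ i, ∃ x ∈ K, ip x (nv i) = h i ∧ ∀ j, j ≠ i → ip x (nv j) < h j)
    (h0 : (0 : E2 n) ∈ interior K)
    (c : ℝ) (hc : 0 < c)
    (z dz : ℝ → E2 n)
    (hint : IntervalIntegrable dz volume 0 1)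
    (hz : ∀ t ∈ Set.Icc (0:ℝ) 1, z t = z 0 + ∫ s in (0:ℝ)..t, dz s)
    (hae : ∀ᵐ t ∂(volume : Measure ℝ), t ∈ Set.Ioo (0:ℝ) 1 →
      ∃ S : Finset (Fin m), S.Nonempty ∧
        (K ∩ ⋂ j ∈ S, {x : E2 n | ip x (nv j) = h j}).Nonempty ∧
        dz t ∈ c • convexHull ℝ ((fun j => (2 / h j) • Jmap (nv j)) '' (S : Set (Fin m)))) :
    ∫ t in (0:ℝ)..1, HKstar K (-(Jmap (dz t))) = c ^ 2 :=
  integral_HKstar_on_polytope_general n m K nv h hKdef hunit h0 c hc dz hae
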